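/- arXiv:1705.08331 — 2 statements merged into one kernel-verified Lean document; each statement's English description precedes it below -/
import Mathlib

section
/- Let α ∈ (0,1/2) and let t(p) be the p-th quantile of the t-distribution with q degrees of freedom. For any spending function s̃(β) = g^{-1}(2wσ̃β/τ̃²) (with g(s) = Φ^{-1}(αs) − Φ^{-1}(α(1−s)), w, σ̃ > 0, τ̃² > 0), the width of the FAB interval C_{s̃}(β̂, σ̂) with endpoints β̄ and β̲ solving β̄ − wσ̂ t(1 − α s̃(β̄)) = β̂ and β̲ − wσ̂ t(α(1 − s̃(β̲))) = β̂ satisfies |C_{s̃}| = β̄ − β̲ < |β̂| + wσ̂·(|t(α/2)| + |t(1−α/2)|). -/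
open MeasureTheory ProbabilityTheory Real Set Matrix

noncomputable section

/-- pdf of the Student t distribution with `q` degrees of freedom. -/
def tPdf (q : ℝ) (x : ℝ) : ℝ :=
  (Real.Gamma ((q + 1) / 2) / (Real.sqrt (q * Real.pi) * Real.Gamma (q / 2))) *
    (1 + x ^ 2 / q) ^ (-(q + 1) / 2)

/-- CDF of the Student t distribution with `q` degrees of freedom. -/
def tCdf (q : ℝ) (x : ℝ) : ℝ := ∫ t in Set.Iic x, tPdf q t

/-- `p`-th quantile of the Student t distribution with `q` degrees of freedom. -/
def tQuantile (q : ℝ) (p : ℝ) : ℝ := sInf {x : ℝ | p ≤ tCdf q x}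

/-- standard normal CDF -/
def Phi (x : ℝ) : ℝ := ((gaussianReal 0 1) (Set.Iic x)).toReal

/-- standard normal quantile function -/
def PhiInv (p : ℝ) : ℝ := sInf {x : ℝ | p ≤ Phi x}

/-- the function `g(s) = Φ⁻¹(αs) − Φ⁻¹(α(1−s))` -/
def gfun (α : ℝ) (s : ℝ) : ℝ := PhiInv (α * s) - PhiInv (α * (1 - s))

/-- inverse of `g` -/
def gInv (α : ℝ) : ℝ → ℝ := Function.invFun (gfun α)

/-- chi-squared measure with `q` degrees of freedom -/
def chiSq (q : ℝ) : Measure ℝ := gammaMeasure (q / 2) (1 / 2)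

/-- The FAB confidence set with spending function `s`, based on t-quantiles
with `q` degrees of freedom. -/
def fabSet (q α : ℝ) (s : ℝ → ℝ) (θhat σhat : ℝ) : Set ℝ :=
  {θ : ℝ | θhat + σhat * tQuantile q (α * (1 - s θ)) < θ ∧
           θ < θhat + σhat * tQuantile q (1 - α * s θ)}

/-- The FAB confidence set with spending function `s`, based on normal quantiles. -/
def fabSetZ (α : ℝ) (s : ℝ → ℝ) (θhat σ : ℝ) : Set ℝ :=
  {θ : ℝ | θhat + σ * PhiInv (α * (1 - s θ)) < θ ∧
           θ < θhat + σ * PhiInv (1 - α * s θ)}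

/-- A measure on `Fin m → ℝ` is multivariate Gaussian with the given mean vector and
covariance matrix iff every linear functional has the corresponding univariate
Gaussian distribution. -/
def IsGaussianVec {m : ℕ} (μ : Measure (Fin m → ℝ)) (mean : Fin m → ℝ)
    (S : Matrix (Fin m) (Fin m) ℝ) : Prop :=
  ∀ u : Fin m → ℝ,
    Measure.map (fun x => ∑ i, u i * x i) μ =
      gaussianReal (∑ i, u i * mean i) (Real.toNNReal (u ⬝ᵥ S.mulVec u))

end

open MeasureTheory ProbabilityTheory Real Set Matrix

/-
Since `g` is continuous on `(0, 1)` and tends to `∓∞` at the endpoints, it maps onto `ℝ`;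
so `gInv` is a genuine right inverse and `g (s̃ β)` has the sign of `β`. As `Φ⁻¹` is
increasing, `g s > 0` forces `s > 1/2`, hence `t(1 - α s̃(β̄)) < t(1 - α/2)` when `β̄ > 0`:
either `β̄ ≤ 0` or `β̄ < β̂ + wσ̂ t(1 - α/2)`. Symmetrically (`g (1 - s) = -g s`) either
`β̲ ≥ 0` or `β̲ ≥ β̂ + wσ̂ t(α/2)`, and all four cases give the bound because
`t(α/2) ≤ 0 < t(1 - α/2)`. Quantiles at levels outside `(0, 1)` are `0` by the `sInf`
convention; since `0` lies between `t(α/2)` and `t(1 - α/2)`, such levels do no harm.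
-/

open Filter Topology
open scoped ENNReal

noncomputable def pdfCdf (f : ℝ → ℝ) (x : ℝ) : ℝ := ∫ t in Iic x, f t

noncomputable def pdfQuantile (f : ℝ → ℝ) (p : ℝ) : ℝ := sInf {x : ℝ | p ≤ pdfCdf f x}

structure IsPositivePdf (f : ℝ → ℝ) : Prop where
  pos : ∀ x, 0 < f x
  integrable : Integrable f
  integral_eq_one : ∫ x, f x = 1

namespace IsPositivePdf

variable {f : ℝ → ℝ} (hf : IsPositivePdf f)
include hf

theorem setIntegral_pos {s : Set ℝ} (hvol : 0 < volume s) : 0 < ∫ t in s, f t := by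
  have hsupp : Function.support f = univ := eq_univ_of_forall fun x => (hf.pos x).ne'
  rwa [setIntegral_pos_iff_support_of_nonneg_ae (ae_of_all _ fun x => (hf.pos x).le)
    hf.integrable.integrableOn, hsupp, univ_inter]

theorem cdf_add_integral_Ioi (x : ℝ) : pdfCdf f x + ∫ t in Ioi x, f t = 1 := by
  rw [pdfCdf, ← hf.integral_eq_one, ← setIntegral_union (Iic_disjoint_Ioi le_rfl)
    measurableSet_Ioi hf.integrable.integrableOn hf.integrable.integrableOn, Iic_union_Ioi,
    setIntegral_univ]

theorem cdf_strictMono : StrictMono (pdfCdf f) := by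
  intro a b hab
  have hsplit : pdfCdf f b = pdfCdf f a + ∫ t in Ioc a b, f t := by
    rw [pdfCdf, pdfCdf, ← Iic_union_Ioc_eq_Iic hab.le, setIntegral_union
      (Iic_disjoint_Ioc le_rfl) measurableSet_Ioc hf.integrable.integrableOn
      hf.integrable.integrableOn]
  have hpos : 0 < ∫ t in Ioc a b, f t := hf.setIntegral_pos (by simpa using hab)
  linarith

theorem continuous_cdf : Continuous (pdfCdf f) := by
  have hprim : pdfCdf f = fun x => pdfCdf f 0 + ∫ t in (0 : ℝ)..x, f t := funext fun x => by
    rw [pdfCdf, pdfCdf, ← intervalIntegral.integral_Iic_sub_Iic hf.integrable.integrableOn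
      hf.integrable.integrableOn]
    ring
  rw [hprim]
  exact continuous_const.add (hf.integrable.continuous_primitive 0)

theorem tendsto_cdf_atTop : Tendsto (pdfCdf f) atTop (𝓝 1) := by
  rw [← hf.integral_eq_one]
  exact (aecover_Iic tendsto_id).integral_tendsto_of_countably_generated hf.integrable

theorem tendsto_cdf_atBot : Tendsto (pdfCdf f) atBot (𝓝 0) := by
  have hIoi : Tendsto (fun x => ∫ t in Ioi x, f t) atBot (𝓝 1) := by
    simpa [← hf.integral_eq_one] using
      (aecover_Ioi tendsto_id).integral_tendsto_of_countably_generated hf.integrable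
  have hcdf : pdfCdf f = fun x => 1 - ∫ t in Ioi x, f t :=
    funext fun x => by linarith [hf.cdf_add_integral_Ioi x]
  simpa [hcdf] using hIoi.const_sub 1

theorem cdf_mem_Ioo (x : ℝ) : pdfCdf f x ∈ Ioo 0 1 := by
  have hIoi := hf.setIntegral_pos (s := Ioi x) (by simp)
  exact ⟨hf.setIntegral_pos (by simp), by linarith [hf.cdf_add_integral_Ioi x]⟩

theorem range_cdf : range (pdfCdf f) = Ioo 0 1 := by
  refine Subset.antisymm (range_subset_iff.2 hf.cdf_mem_Ioo) fun p hp => ?_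
  exact mem_range_of_exists_le_of_exists_ge hf.continuous_cdf
    (hf.tendsto_cdf_atBot.eventually (eventually_le_nhds hp.1)).exists
    (hf.tendsto_cdf_atTop.eventually (eventually_ge_nhds hp.2)).exists

theorem quantile_cdf (x : ℝ) : pdfQuantile f (pdfCdf f x) = x := by
  have hset : {y | pdfCdf f x ≤ pdfCdf f y} = Ici x := by
    ext y
    exact hf.cdf_strictMono.le_iff_le
  rw [pdfQuantile, hset, csInf_Ici]

theorem quantile_of_notMem {p : ℝ} (hp : p ∉ Ioo 0 1) : pdfQuantile f p = 0 := by
  rcases le_or_gt p 0 with hp0 | hp0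
  · have hset : {x | p ≤ pdfCdf f x} = univ :=
      eq_univ_of_forall fun x => hp0.trans (hf.cdf_mem_Ioo x).1.le
    rw [pdfQuantile, hset, Real.sInf_univ]
  · have hset : {x | p ≤ pdfCdf f x} = ∅ :=
      eq_empty_of_forall_notMem fun x hx => hp ⟨hp0, hx.trans_lt (hf.cdf_mem_Ioo x).2⟩
    rw [pdfQuantile, hset, Real.sInf_empty]

theorem strictMonoOn_quantile : StrictMonoOn (pdfQuantile f) (Ioo 0 1) := by
  rw [← hf.range_cdf]
  rintro _ ⟨x, rfl⟩ _ ⟨y, rfl⟩ hxy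
  rwa [hf.quantile_cdf, hf.quantile_cdf, ← hf.cdf_strictMono.lt_iff_lt]

theorem continuousOn_quantile : ContinuousOn (pdfQuantile f) (Ioo 0 1) := by
  intro p hp
  refine (continuousAt_of_monotoneOn_of_image_mem_nhds hf.strictMonoOn_quantile.monotoneOn
    (Ioo_mem_nhds hp.1 hp.2) ?_).continuousWithinAt
  have himage : pdfQuantile f '' Ioo 0 1 = univ := by
    rw [← hf.range_cdf, ← range_comp]
    exact range_eq_univ.2 fun x => ⟨x, hf.quantile_cdf x⟩
  rw [himage]
  exact univ_mem

theorem cdf_zero_of_even (heven : ∀ x, f (-x) = f x) : pdfCdf f 0 = 1 / 2 := by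
  have hsymm : pdfCdf f 0 = ∫ t in Ioi 0, f t := by
    rw [pdfCdf, ← neg_zero, ← integral_comp_neg_Iic]
    simp [heven]
  linarith [hf.cdf_add_integral_Ioi 0]

end IsPositivePdf

theorem isPositivePdf_gaussianPDFReal (μ : ℝ) {v : NNReal} (hv : v ≠ 0) :
    IsPositivePdf (gaussianPDFReal μ v) :=
  ⟨fun x => gaussianPDFReal_pos μ v x hv, integrable_gaussianPDFReal μ v,
    integral_gaussianPDFReal_eq_one μ hv⟩

theorem Phi_eq_pdfCdf : Phi = pdfCdf (gaussianPDFReal 0 1) := funext fun x => by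
  rw [Phi, gaussianReal_apply_eq_integral 0 one_ne_zero,
    ENNReal.toReal_ofReal (integral_nonneg fun t => gaussianPDFReal_nonneg 0 1 t), pdfCdf]

theorem PhiInv_eq_pdfQuantile : PhiInv = pdfQuantile (gaussianPDFReal 0 1) := by
  funext p
  rw [PhiInv, pdfQuantile, Phi_eq_pdfCdf]

theorem Phi_mem_Ioo (x : ℝ) : Phi x ∈ Ioo 0 1 :=
  Phi_eq_pdfCdf ▸ (isPositivePdf_gaussianPDFReal 0 one_ne_zero).cdf_mem_Ioo x

theorem PhiInv_Phi (x : ℝ) : PhiInv (Phi x) = x := by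
  rw [PhiInv_eq_pdfQuantile, Phi_eq_pdfCdf,
    (isPositivePdf_gaussianPDFReal 0 one_ne_zero).quantile_cdf]

theorem strictMonoOn_PhiInv : StrictMonoOn PhiInv (Ioo 0 1) :=
  PhiInv_eq_pdfQuantile ▸ (isPositivePdf_gaussianPDFReal 0 one_ne_zero).strictMonoOn_quantile

theorem continuousOn_PhiInv : ContinuousOn PhiInv (Ioo 0 1) :=
  PhiInv_eq_pdfQuantile ▸ (isPositivePdf_gaussianPDFReal 0 one_ne_zero).continuousOn_quantile

section gfun

variable {α : ℝ}

theorem gfun_one_sub (α s : ℝ) : gfun α (1 - s) = -gfun α s := by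
  simp only [gfun, sub_sub_cancel]
  ring

theorem half_lt_of_gfun_pos (hα0 : 0 < α) (hα1 : α ≤ 1) {s : ℝ} (hs : 0 < s)
    (hg : 0 < gfun α s) : 1 / 2 < s := by
  by_contra! hle
  have hmono : PhiInv (α * s) ≤ PhiInv (α * (1 - s)) :=
    strictMonoOn_PhiInv.monotoneOn ⟨by positivity, by nlinarith⟩
      ⟨by nlinarith, by nlinarith⟩ (by nlinarith)
  rw [gfun] at hg
  linarith

theorem continuousOn_gfun (hα0 : 0 < α) (hα1 : α ≤ 1) : ContinuousOn (gfun α) (Ioo 0 1) := by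
  refine (continuousOn_PhiInv.comp (by fun_prop : Continuous fun s => α * s).continuousOn ?_).sub
    (continuousOn_PhiInv.comp (by fun_prop : Continuous fun s => α * (1 - s)).continuousOn ?_)
  · exact fun s hs => ⟨by nlinarith [hs.1], by nlinarith [hs.2]⟩
  · exact fun s hs => ⟨by nlinarith [hs.2], by nlinarith [hs.1]⟩

theorem exists_gfun_le (hα0 : 0 < α) (hα1 : α ≤ 1) (x : ℝ) :
    ∃ s ∈ Ioc 0 (1 / 2), gfun α s ≤ x := by
  set m := PhiInv (α / 2)
  -- `s = e / α` makes `Φ⁻¹(α s) ≤ x + m` while `Φ⁻¹(α (1 - s)) ≥ m`.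
  set e := min (Phi (x + m)) (α / 2)
  have he : 0 < e := lt_min (Phi_mem_Ioo _).1 (by positivity)
  have he' : e ≤ α / 2 := min_le_right _ _
  have hle : PhiInv e ≤ x + m := by
    calc PhiInv e ≤ PhiInv (Phi (x + m)) :=
          strictMonoOn_PhiInv.monotoneOn ⟨he, (min_le_left _ _).trans_lt (Phi_mem_Ioo _).2⟩
            (Phi_mem_Ioo _) (min_le_left _ _)
      _ = x + m := PhiInv_Phi _
  have hge : m ≤ PhiInv (α - e) :=
    strictMonoOn_PhiInv.monotoneOn ⟨by positivity, by linarith⟩ ⟨by linarith, by linarith⟩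
      (by linarith)
  refine ⟨e / α, ⟨by positivity, by rw [div_le_iff₀ hα0]; linarith⟩, ?_⟩
  rw [gfun, mul_div_cancel₀ _ hα0.ne', mul_one_sub, mul_div_cancel₀ _ hα0.ne']
  linarith

theorem gfun_surjective (hα0 : 0 < α) (hα1 : α ≤ 1) : Function.Surjective (gfun α) := by
  intro x
  obtain ⟨s₁, hs₁, hle⟩ := exists_gfun_le hα0 hα1 x
  obtain ⟨s₂, hs₂, hge⟩ := exists_gfun_le hα0 hα1 (-x)
  have hIcc : Icc s₁ (1 - s₂) ⊆ Ioo 0 1 := fun s hs =>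
    ⟨hs₁.1.trans_le hs.1, hs.2.trans_lt (by linarith [hs₂.1])⟩
  obtain ⟨s, -, hs⟩ := intermediate_value_Icc (by linarith [hs₁.2, hs₂.2])
    ((continuousOn_gfun hα0 hα1).mono hIcc) ⟨hle, by rw [gfun_one_sub]; linarith⟩
  exact ⟨s, hs⟩

theorem gfun_gInv (hα0 : 0 < α) (hα1 : α ≤ 1) (x : ℝ) : gfun α (gInv α x) = x :=
  Function.rightInverse_invFun (gfun_surjective hα0 hα1) x

end gfun

theorem lintegral_rpow_mul_exp_neg_mul_Ioi {a r : ℝ} (ha : 0 < a) (hr : 0 < r) :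
    ∫⁻ t in Ioi 0, ENNReal.ofReal (t ^ (a - 1) * exp (-(r * t))) =
      ENNReal.ofReal ((1 / r) ^ a * Gamma a) := by
  rw [← integral_rpow_mul_exp_neg_mul_Ioi ha hr, ofReal_integral_eq_lintegral_ofReal]
  · simpa [neg_mul] using (integrableOn_rpow_mul_exp_neg_mul_rpow (p := 1) (s := a - 1)
      (by linarith) one_pos hr).integrable
  · filter_upwards [self_mem_ae_restrict measurableSet_Ioi] with t ht
    exact mul_nonneg (rpow_nonneg (le_of_lt ht) _) (exp_pos _).le

theorem lintegral_exp_neg_mul_sq {b : ℝ} (hb : 0 < b) :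
    ∫⁻ x, ENNReal.ofReal (exp (-b * x ^ 2)) = ENNReal.ofReal (√(π / b)) := by
  rw [← integral_gaussian, ofReal_integral_eq_lintegral_ofReal (integrable_exp_neg_mul_sq hb)
    (ae_of_all _ fun x => (exp_pos _).le)]

theorem lintegral_rpow_mul_exp_neg_one_add_sq_div_mul {q t : ℝ} (hq : 0 < q) (ht : 0 < t) :
    ∫⁻ x, ENNReal.ofReal (t ^ ((q + 1) / 2 - 1) * exp (-((1 + x ^ 2 / q) * t))) =
      ENNReal.ofReal (√(q * π) * (t ^ (q / 2 - 1) * exp (-t))) := by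
  have hsplit : ∀ x : ℝ, t ^ ((q + 1) / 2 - 1) * exp (-((1 + x ^ 2 / q) * t)) =
      t ^ ((q + 1) / 2 - 1) * exp (-t) * exp (-(t / q) * x ^ 2) := fun x => by
    rw [mul_assoc, ← exp_add]
    congr 2
    ring
  have hconst : t ^ ((q + 1) / 2 - 1) * exp (-t) * √(π / (t / q)) =
      √(q * π) * (t ^ (q / 2 - 1) * exp (-t)) := by
    rw [show (q + 1) / 2 - 1 = q / 2 - 1 + 1 / 2 by ring, rpow_add ht, ← sqrt_eq_rpow,
      div_div_eq_mul_div, mul_comm π q, sqrt_div (by positivity)]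
    field_simp [(sqrt_pos.2 ht).ne']
  have hA : 0 ≤ t ^ ((q + 1) / 2 - 1) * exp (-t) := by positivity
  simp_rw [hsplit, ENNReal.ofReal_mul hA]
  rw [lintegral_const_mul' _ _ ENNReal.ofReal_ne_top, lintegral_exp_neg_mul_sq (by positivity),
    ← ENNReal.ofReal_mul (by positivity), hconst]

/- With `a = (q + 1) / 2` and `φ x = 1 + x² / q`, write `Γ(a) φ(x)^(-a)` as
`∫ t > 0, t^(a-1) e^(-φ(x) t)`; after swapping the integrals, the `x`-integral is Gaussian. -/
theorem lintegral_tPdf {q : ℝ} (hq : 0 < q) : ∫⁻ x, ENNReal.ofReal (tPdf q x) = 1 := by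
  set a := (q + 1) / 2
  set c := 1 / (√(q * π) * Gamma (q / 2))
  set G : ℝ → ℝ → ℝ≥0∞ := fun x t =>
    ENNReal.ofReal (t ^ (a - 1) * exp (-((1 + x ^ 2 / q) * t)))
  have hG : Measurable (Function.uncurry G) := by
    unfold G
    fun_prop
  have hGamma : ∀ x, ENNReal.ofReal (tPdf q x) = ENNReal.ofReal c * ∫⁻ t in Ioi 0, G x t := by
    intro x
    have hφ : 0 < 1 + x ^ 2 / q := by positivity
    rw [lintegral_rpow_mul_exp_neg_mul_Ioi (by positivity) hφ,
      ← ENNReal.ofReal_mul (by positivity), tPdf, one_div, inv_rpow hφ.le, ← rpow_neg hφ.le,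
      neg_div]
    congr 1
    unfold c a
    ring
  calc ∫⁻ x, ENNReal.ofReal (tPdf q x)
      = ENNReal.ofReal c * ∫⁻ x, ∫⁻ t in Ioi 0, G x t := by
        simp_rw [hGamma]
        exact lintegral_const_mul _ hG.lintegral_prod_right'
    _ = ENNReal.ofReal c * ∫⁻ t in Ioi 0, ∫⁻ x, G x t := by
        rw [lintegral_lintegral_swap hG.aemeasurable]
    _ = ENNReal.ofReal c * ∫⁻ t in Ioi 0, ENNReal.ofReal (√(q * π)) *
          ENNReal.ofReal (t ^ (q / 2 - 1) * exp (-(1 * t))) := by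
        congr 1
        refine setLIntegral_congr_fun measurableSet_Ioi fun t ht => ?_
        rw [lintegral_rpow_mul_exp_neg_one_add_sq_div_mul hq ht, one_mul,
          ENNReal.ofReal_mul (sqrt_nonneg _)]
    _ = 1 := by
        rw [lintegral_const_mul' _ _ ENNReal.ofReal_ne_top,
          lintegral_rpow_mul_exp_neg_mul_Ioi (by positivity) one_pos, div_one, one_rpow,
          one_mul, ← ENNReal.ofReal_mul (sqrt_nonneg _), ← ENNReal.ofReal_mul (by positivity),
          ← ENNReal.ofReal_one]
        congr 1
        unfold c
        field_simp [(sqrt_pos.2 (by positivity : 0 < q * π)).ne',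
          (Gamma_pos_of_pos (by positivity : 0 < q / 2)).ne']

theorem tPdf_pos {q : ℝ} (hq : 0 < q) (x : ℝ) : 0 < tPdf q x := by
  unfold tPdf
  positivity

theorem tPdf_neg (q x : ℝ) : tPdf q (-x) = tPdf q x := by
  simp only [tPdf, even_two.neg_pow]

theorem isPositivePdf_tPdf {q : ℝ} (hq : 0 < q) : IsPositivePdf (tPdf q) := by
  have hmeas : Measurable (tPdf q) := by
    unfold tPdf
    fun_prop
  have hnonneg : 0 ≤ᵐ[volume] tPdf q := ae_of_all _ fun x => (tPdf_pos hq x).le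
  refine ⟨tPdf_pos hq, ⟨hmeas.aestronglyMeasurable, ?_⟩, ?_⟩
  · rw [hasFiniteIntegral_iff_ofReal hnonneg, lintegral_tPdf hq]
    exact ENNReal.one_lt_top
  · rw [integral_eq_lintegral_of_nonneg_ae hnonneg hmeas.aestronglyMeasurable, lintegral_tPdf hq,
      ENNReal.toReal_one]

theorem tQuantile_eq_pdfQuantile (q : ℝ) : tQuantile q = pdfQuantile (tPdf q) := rfl

namespace IsPositivePdf

variable {f : ℝ → ℝ} (hf : IsPositivePdf f) (hmed : pdfCdf f 0 = 1 / 2) {α : ℝ}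
include hf hmed

theorem quantile_half : pdfQuantile f (1 / 2) = 0 :=
  hmed ▸ hf.quantile_cdf 0

theorem quantile_pos {p : ℝ} (hp : p ∈ Ioo (1 / 2) 1) : 0 < pdfQuantile f p := by
  rw [← hf.quantile_half hmed]
  exact hf.strictMonoOn_quantile ⟨by norm_num, by norm_num⟩ ⟨by linarith [hp.1], hp.2⟩ hp.1

theorem quantile_nonpos {p : ℝ} (hp : p ≤ 1 / 2) : pdfQuantile f p ≤ 0 := by
  by_cases hp0 : p ∈ Ioo 0 1
  · rw [← hf.quantile_half hmed]
    exact hf.strictMonoOn_quantile.monotoneOn hp0 ⟨by norm_num, by norm_num⟩ hp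
  · exact (hf.quantile_of_notMem hp0).le

theorem quantile_one_sub_mul_lt_of_gfun_pos (hα0 : 0 < α) (hα1 : α < 1) {s : ℝ}
    (hg : 0 < gfun α s) : pdfQuantile f (1 - α * s) < pdfQuantile f (1 - α / 2) := by
  have hα2 : 1 - α / 2 ∈ Ioo (1 / 2) 1 := ⟨by linarith, by linarith⟩
  by_cases hp : 1 - α * s ∈ Ioo 0 1
  · have hs := half_lt_of_gfun_pos hα0 hα1.le
      (pos_of_mul_pos_right (by linarith [hp.2]) hα0.le) hg
    exact hf.strictMonoOn_quantile hp ⟨by linarith [hα2.1], hα2.2⟩ (by nlinarith)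
  · rw [hf.quantile_of_notMem hp]
    exact hf.quantile_pos hmed hα2

theorem quantile_le_mul_one_sub_of_gfun_neg (hα0 : 0 < α) (hα1 : α ≤ 1) {s : ℝ}
    (hg : gfun α s < 0) : pdfQuantile f (α / 2) ≤ pdfQuantile f (α * (1 - s)) := by
  by_cases hp : α * (1 - s) ∈ Ioo 0 1
  · have hs := half_lt_of_gfun_pos hα0 hα1 (pos_of_mul_pos_right hp.1 hα0.le)
      (by rw [gfun_one_sub]; linarith)
    exact hf.strictMonoOn_quantile.monotoneOn ⟨by positivity, by linarith⟩ hp (by nlinarith)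
  · rw [hf.quantile_of_notMem hp]
    exact hf.quantile_nonpos hmed (by linarith)

theorem upper_endpoint_bound (hα0 : 0 < α) (hα1 : α < 1) {c s b βh : ℝ} (hc : 0 < c)
    (hs : 0 < b → 0 < gfun α s) (hb : b - c * pdfQuantile f (1 - α * s) = βh) :
    b ≤ 0 ∨ b < βh + c * pdfQuantile f (1 - α / 2) := by
  refine or_iff_not_imp_left.2 fun hb0 => ?_
  have ht := hf.quantile_one_sub_mul_lt_of_gfun_pos hmed hα0 hα1 (hs (not_le.1 hb0))
  linarith [mul_lt_mul_of_pos_left ht hc]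

theorem lower_endpoint_bound (hα0 : 0 < α) (hα1 : α ≤ 1) {c s b βh : ℝ} (hc : 0 < c)
    (hs : b < 0 → gfun α s < 0) (hb : b - c * pdfQuantile f (α * (1 - s)) = βh) :
    0 ≤ b ∨ βh + c * pdfQuantile f (α / 2) ≤ b := by
  refine or_iff_not_imp_left.2 fun hb0 => ?_
  have ht := hf.quantile_le_mul_one_sub_of_gfun_neg hmed hα0 hα1 (hs (not_le.1 hb0))
  linarith [mul_le_mul_of_nonneg_left ht hc.le]

end IsPositivePdf

/-- Lemma 3: the width of the FAB interval, whose endpoints `β̄, β̲` solve the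
defining equations, is bounded by `|β̂| + wσ̂(|t(α/2)| + |t(1−α/2)|)`. -/
theorem fab_width_bound
    (q : ℕ) (hq : 1 ≤ q) (α : ℝ) (hα : α ∈ Set.Ioo (0 : ℝ) (1 / 2))
    (w σt τ2 σh βh : ℝ) (hw : 0 < w) (hσt : 0 < σt) (hτ2 : 0 < τ2) (hσh : 0 < σh)
    (βbar βlow : ℝ)
    (hup : βbar - w * σh * tQuantile q (1 - α * gInv α (2 * w * σt * βbar / τ2)) = βh)
    (hlo : βlow - w * σh * tQuantile q (α * (1 - gInv α (2 * w * σt * βlow / τ2))) = βh) :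
    βbar - βlow < |βh| + w * σh * (|tQuantile q (α / 2)| + |tQuantile q (1 - α / 2)|) := by
  obtain ⟨hα0, hα2⟩ := hα
  have hf := isPositivePdf_tPdf (q := q) (by exact_mod_cast hq)
  have hmed := hf.cdf_zero_of_even (tPdf_neg q)
  have hgInv := gfun_gInv hα0 (by linarith : α ≤ 1)
  have hc : 0 < w * σh := mul_pos hw hσh
  rw [tQuantile_eq_pdfQuantile] at hup hlo ⊢
  have hupper := hf.upper_endpoint_bound hmed hα0 (by linarith) hc
    (fun hb => by rw [hgInv]; positivity) hup
  have hlower := hf.lower_endpoint_bound hmed hα0 (by linarith) hc (fun hb => by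
    rw [hgInv]
    exact div_neg_of_neg_of_pos (mul_neg_of_pos_of_neg (by positivity) hb) hτ2) hlo
  have hTp := hf.quantile_pos hmed (p := 1 - α / 2) ⟨by linarith, by linarith⟩
  have hTm := hf.quantile_nonpos hmed (p := α / 2) (by linarith)
  have hTp_abs := mul_le_mul_of_nonneg_left (le_abs_self (pdfQuantile (tPdf q) (1 - α / 2))) hc.le
  have hTm_abs := mul_le_mul_of_nonneg_left (neg_abs_le (pdfQuantile (tPdf q) (α / 2))) hc.le
  rcases hupper with hu | hu <;> rcases hlower with hl | hl <;>
    linarith [le_abs_self βh, neg_abs_le βh, mul_pos hc hTp,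
      mul_nonneg hc.le (abs_nonneg (pdfQuantile (tPdf q) (α / 2)))]
end

section
/- In the diagonal-covariance model, with q_i(θ) = y_i²/(λ_iτ² + σ²) − log((λ_iτ₀² + σ₀²)/(λ_iτ² + σ²)) for θ = (τ², σ²) in a compact set Θ ⊂ [0,∞) × (0,∞) with ε = min_Θ σ² > 0, the Lipschitz bound |q_i(θ) − q_i(θ′)| ≤ g(y_i, λ_i)·||θ − θ′|| holds for all θ, θ′ ∈ Θ, where g(y_i, λ_i) = (1 + y_i²/ε)(λ_i + 1)/ε. -/
open MeasureTheory ProbabilityTheory Real Set Matrix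

noncomputable section

/-- `q_i(θ)`: minus twice the contribution of `y_i` to the log-likelihood (plus a
constant) in the diagonal-covariance model, with true parameter `(τ₀², σ₀²)` and
`θ = (τ², σ²)`. -/
def qContrib (τ0 σ0 : ℝ) (lam : ℝ) (θ : ℝ × ℝ) (yi : ℝ) : ℝ :=
  yi ^ 2 / (lam * θ.1 + θ.2) - Real.log ((lam * τ0 + σ0) / (lam * θ.1 + θ.2))

/-- `Q_n(θ) = (1/n) ∑ q_i(θ)`. -/
def Qobj {n : ℕ} (τ0 σ0 : ℝ) (lam : Fin n → ℝ) (yv : Fin n → ℝ) (θ : ℝ × ℝ) : ℝ :=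
  (∑ i, qContrib τ0 σ0 (lam i) θ (yv i)) / n

/-- The limiting population objective `Q₀(θ)`. -/
def Qlim (F0 : Measure ℝ) (τ0 σ0 : ℝ) (θ : ℝ × ℝ) : ℝ :=
  ∫ lam, ((lam * τ0 + σ0) / (lam * θ.1 + θ.2)
      - Real.log ((lam * τ0 + σ0) / (lam * θ.1 + θ.2))) ∂F0

end

open MeasureTheory ProbabilityTheory Real Set Matrix Filter

/-!
Up to the constant `log (λ τ₀² + σ₀²)`, `q_i(θ) = y²/v + log v` depends on `θ` only through the
variance `v = λ τ² + σ²`, which is at least `ε` on `Θ`. On `[ε, ∞)` the map `v ↦ y²/v + log v`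
is `(1 + y²/ε)/ε`-Lipschitz, and `θ ↦ v` is `(λ + 1)`-Lipschitz for the Euclidean norm.
-/

lemma abs_log_sub_log_le {e a b : ℝ} (he : 0 < e) (ha : e ≤ a) (hb : e ≤ b) :
    |log a - log b| ≤ |a - b| / e := by
  wlog hba : b ≤ a generalizing a b
  · rw [abs_sub_comm, abs_sub_comm a b]
    exact this hb ha (le_of_not_ge hba)
  have ha0 : 0 < a := he.trans_le ha
  have hb0 : 0 < b := he.trans_le hb
  have hlog : log a - log b ≤ (a - b) / b := by
    rw [← log_div ha0.ne' hb0.ne', sub_div, div_self hb0.ne']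
    exact log_le_sub_one_of_pos (div_pos ha0 hb0)
  rw [abs_of_nonneg (sub_nonneg.2 (log_le_log hb0 hba)), abs_of_nonneg (sub_nonneg.2 hba)]
  exact hlog.trans (div_le_div_of_nonneg_left (sub_nonneg.2 hba) he hb)

lemma abs_inv_sub_inv_le {e a b : ℝ} (he : 0 < e) (ha : e ≤ a) (hb : e ≤ b) :
    |a⁻¹ - b⁻¹| ≤ |a - b| / e ^ 2 := by
  have ha0 : 0 < a := he.trans_le ha
  have hb0 : 0 < b := he.trans_le hb
  rw [inv_sub_inv ha0.ne' hb0.ne', abs_div, abs_of_pos (mul_pos ha0 hb0), abs_sub_comm, sq]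
  gcongr

lemma abs_div_add_log_sub_le {e s a b : ℝ} (he : 0 < e) (hs : 0 ≤ s) (ha : e ≤ a) (hb : e ≤ b) :
    |(s / a + log a) - (s / b + log b)| ≤ (1 + s / e) / e * |a - b| :=
  calc |(s / a + log a) - (s / b + log b)|
      = |s * (a⁻¹ - b⁻¹) + (log a - log b)| := by ring_nf
    _ ≤ s * (|a - b| / e ^ 2) + |a - b| / e := by
        refine (abs_add_le _ _).trans (add_le_add ?_ (abs_log_sub_log_le he ha hb))
        rw [abs_mul, abs_of_nonneg hs]
        exact mul_le_mul_of_nonneg_left (abs_inv_sub_inv_le he ha hb) hs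
    _ = (1 + s / e) / e * |a - b| := by field_simp; ring

lemma abs_mul_add_le_mul_sqrt {c x y : ℝ} (hc : 0 ≤ c) :
    |c * x + y| ≤ (c + 1) * √(x ^ 2 + y ^ 2) := by
  have hx : |x| ≤ √(x ^ 2 + y ^ 2) := by
    rw [← sqrt_sq_eq_abs]; exact sqrt_le_sqrt (by nlinarith)
  have hy : |y| ≤ √(x ^ 2 + y ^ 2) := by
    rw [← sqrt_sq_eq_abs]; exact sqrt_le_sqrt (by nlinarith)
  calc |c * x + y| ≤ c * |x| + |y| := by
        simpa only [abs_mul, abs_of_nonneg hc] using abs_add_le (c * x) y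
    _ ≤ (c + 1) * √(x ^ 2 + y ^ 2) := by nlinarith

/-- The variance `λ τ² + σ²` of `y_i` under `θ = (τ², σ²)`. -/
def marginalVar (lam : ℝ) (θ : ℝ × ℝ) : ℝ := lam * θ.1 + θ.2

lemma qContrib_eq {τ0 σ0 lam yi : ℝ} {θ : ℝ × ℝ} (hc : lam * τ0 + σ0 ≠ 0)
    (hv : marginalVar lam θ ≠ 0) :
    qContrib τ0 σ0 lam θ yi =
      yi ^ 2 / marginalVar lam θ + log (marginalVar lam θ) - log (lam * τ0 + σ0) := by
  rw [qContrib, ← marginalVar, log_div hc hv]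
  ring

lemma abs_marginalVar_sub_le {lam : ℝ} (hlam : 0 ≤ lam) (θ θ' : ℝ × ℝ) :
    |marginalVar lam θ - marginalVar lam θ'| ≤
      (lam + 1) * √((θ.1 - θ'.1) ^ 2 + (θ.2 - θ'.2) ^ 2) := by
  convert abs_mul_add_le_mul_sqrt hlam using 2
  simp only [marginalVar]
  ring

lemma le_marginalVar {lam : ℝ} (hlam : 0 ≤ lam) {θ : ℝ × ℝ} (h : 0 ≤ θ.1) :
    θ.2 ≤ marginalVar lam θ :=
  le_add_of_nonneg_left (mul_nonneg hlam h)

theorem qContrib_lipschitz_general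
    (τ0 σ0 : ℝ) (hτ0 : 0 ≤ τ0) (hσ0 : 0 < σ0)
    (Θ : Set (ℝ × ℝ))
    (hΘsub : Θ ⊆ Set.Ici 0 ×ˢ Set.Ioi 0)
    (ε : ℝ) (hε : ε = sInf (Prod.snd '' Θ)) (hεpos : 0 < ε)
    (lam : ℝ) (hlam : 0 < lam) (yi : ℝ) :
    ∀ θ ∈ Θ, ∀ θ' ∈ Θ,
      |qContrib τ0 σ0 lam θ yi - qContrib τ0 σ0 lam θ' yi| ≤
        (1 + yi ^ 2 / ε) * (lam + 1) / ε *
          Real.sqrt ((θ.1 - θ'.1) ^ 2 + (θ.2 - θ'.2) ^ 2) := by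
  have hbdd : BddBelow (Prod.snd '' Θ) := ⟨0, by
    rintro _ ⟨p, hp, rfl⟩
    exact (hΘsub hp).2.le⟩
  have hε_le : ∀ p ∈ Θ, ε ≤ marginalVar lam p := fun p hp =>
    hε ▸ (csInf_le hbdd ⟨p, hp, rfl⟩).trans (le_marginalVar hlam.le (hΘsub hp).1)
  have hc : lam * τ0 + σ0 ≠ 0 := by positivity
  intro θ hθ θ' hθ'
  rw [qContrib_eq hc (hεpos.trans_le (hε_le θ hθ)).ne',
    qContrib_eq hc (hεpos.trans_le (hε_le θ' hθ')).ne']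
  calc _ = |(yi ^ 2 / marginalVar lam θ + log (marginalVar lam θ)) -
          (yi ^ 2 / marginalVar lam θ' + log (marginalVar lam θ'))| := by congr 1; ring
    _ ≤ (1 + yi ^ 2 / ε) / ε * |marginalVar lam θ - marginalVar lam θ'| :=
        abs_div_add_log_sub_le hεpos (sq_nonneg yi) (hε_le θ hθ) (hε_le θ' hθ')
    _ ≤ (1 + yi ^ 2 / ε) / ε * ((lam + 1) * √((θ.1 - θ'.1) ^ 2 + (θ.2 - θ'.2) ^ 2)) := by
        gcongr
        exact abs_marginalVar_sub_le hlam.le θ θ'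
    _ = _ := by ring

/-- The Lipschitz bound `|q_i(θ) − q_i(θ′)| ≤ (1 + y²/ε)(λ + 1)/ε ⬝ ‖θ − θ′‖` on the
compact set `Θ`, where `ε = min_Θ σ²` and `‖·‖` is the Euclidean norm on `ℝ²`. -/
theorem qContrib_lipschitz
    (τ0 σ0 : ℝ) (hτ0 : 0 ≤ τ0) (hσ0 : 0 < σ0)
    (Θ : Set (ℝ × ℝ)) (hΘc : IsCompact Θ) (hΘne : Θ.Nonempty)
    (hΘsub : Θ ⊆ Set.Ici 0 ×ˢ Set.Ioi 0)
    (ε : ℝ) (hε : ε = sInf (Prod.snd '' Θ)) (hεpos : 0 < ε)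
    (lam : ℝ) (hlam : 0 < lam) (yi : ℝ) :
    ∀ θ ∈ Θ, ∀ θ' ∈ Θ,
      |qContrib τ0 σ0 lam θ yi - qContrib τ0 σ0 lam θ' yi| ≤
        (1 + yi ^ 2 / ε) * (lam + 1) / ε *
          Real.sqrt ((θ.1 - θ'.1) ^ 2 + (θ.2 - θ'.2) ^ 2) :=
  qContrib_lipschitz_general τ0 σ0 hτ0 hσ0 Θ hΘsub ε hε hεpos lam hlam yi
end
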